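/- Legendre's relation: for every k with 0 < k < 1, K(k)·E(k') + E(k)·K(k') − K(k)·K(k') = π/2, where k' = √(1−k²). -/

import Mathlib

open Real

/-- The complete elliptic integral of the first kind. -/
noncomputable def EllipticK (k : ℝ) : ℝ :=
  ∫ θ in (0:ℝ)..(π / 2), 1 / Real.sqrt (1 - k ^ 2 * Real.sin θ ^ 2)

/-- The complete elliptic integral of the second kind. -/
noncomputable def EllipticE (k : ℝ) : ℝ :=
  ∫ θ in (0:ℝ)..(π / 2), Real.sqrt (1 - k ^ 2 * Real.sin θ ^ 2)

/-!
Legendre's argument. Write `Δ = √(1 - k² sin² θ)`. Differentiating under the integral sign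
gives `E' = (E - K) / k` and `K' = (E - k'² K) / (k k'²)`; the latter because
`d/dθ (k² sin θ cos θ / Δ) = Δ - k'² / Δ³` integrates to zero over `[0, π/2]`, so
`∫ Δ⁻³ = E / k'²`. Together with `dk'/dk = -k / k'` this makes the left-hand side `L(k)`
constant on `(0, 1)`. Finally `L = K(k) E(k') - (K(k) - E(k)) K(k')`: as `k → 0⁺` the first
term tends to `K(0) E(1) = π/2`, and `0 ≤ K - E ≤ k² K`, `K(k') ≤ π / (2k)` make the second
one `O(k)`.
-/

open MeasureTheory Set Filter Topology

theorem hasDerivAt_intervalIntegral_of_continuousOn {F F' : ℝ → ℝ → ℝ} {U : Set ℝ}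
    {x₀ : ℝ} (hU : IsOpen U) (hx₀ : x₀ ∈ U) (a b : ℝ)
    (hF : ContinuousOn (fun p : ℝ × ℝ => F p.1 p.2) (U ×ˢ univ))
    (hF' : ContinuousOn (fun p : ℝ × ℝ => F' p.1 p.2) (U ×ˢ univ))
    (hderiv : ∀ x ∈ U, ∀ t, HasDerivAt (F · t) (F' x t) x) :
    HasDerivAt (fun x => ∫ t in a..b, F x t) (∫ t in a..b, F' x₀ t) x₀ := by
  obtain ⟨ε, hε, hball⟩ := Metric.nhds_basis_closedBall.mem_iff.1 (hU.mem_nhds hx₀)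
  have hslice : ∀ {G : ℝ → ℝ → ℝ}, ContinuousOn (fun p : ℝ × ℝ => G p.1 p.2) (U ×ˢ univ) →
      ∀ x ∈ U, Continuous (G x) := fun hG x hx =>
    hG.comp_continuous (Continuous.prodMk_right x) fun _ => ⟨hx, trivial⟩
  obtain ⟨C, hC⟩ :=
    ((isCompact_closedBall x₀ ε).prod isCompact_uIcc).exists_bound_of_continuousOn
      (hF'.mono (prod_mono hball (subset_univ (uIcc a b))))
  exact (intervalIntegral.hasDerivAt_integral_of_dominated_loc_of_deriv_le (bound := fun _ => C)
    (Metric.closedBall_mem_nhds x₀ hε)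
    (eventually_of_mem (hU.mem_nhds hx₀) fun x hx => (hslice hF x hx).aestronglyMeasurable)
    ((hslice hF x₀ hx₀).intervalIntegrable a b) (hslice hF' x₀ hx₀).aestronglyMeasurable
    (ae_of_all _ fun t ht x hx => hC (x, t) ⟨hx, uIoc_subset_uIcc ht⟩) intervalIntegrable_const
    (ae_of_all _ fun t _ x hx => hderiv x (hball hx) t)).2

section

variable {k : ℝ}

lemma one_sub_sq_mul_sin_sq_pos (hk : k ^ 2 < 1) (θ : ℝ) : 0 < 1 - k ^ 2 * sin θ ^ 2 := by
  nlinarith [sin_sq_le_one θ, sq_nonneg (sin θ)]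

lemma sqrt_one_sub_sq_le_sqrt_one_sub_sq_mul_sin_sq (k θ : ℝ) :
    √(1 - k ^ 2) ≤ √(1 - k ^ 2 * sin θ ^ 2) :=
  sqrt_le_sqrt (by nlinarith [sin_sq_le_one θ, sq_nonneg k])

lemma sqrt_one_sub_sq_mul_sin_sq_le_one (k θ : ℝ) : √(1 - k ^ 2 * sin θ ^ 2) ≤ 1 :=
  sqrt_le_one.2 (by nlinarith [sq_nonneg (k * sin θ)])

lemma sqrt_one_sub_sq_mul_sin_sq_pos (hk : k ^ 2 < 1) (θ : ℝ) :
    0 < √(1 - k ^ 2 * sin θ ^ 2) :=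
  sqrt_pos.2 (one_sub_sq_mul_sin_sq_pos hk θ)

lemma continuous_sqrt_one_sub_sq_mul_sin_sq (k : ℝ) :
    Continuous fun θ => √(1 - k ^ 2 * sin θ ^ 2) := by
  fun_prop

lemma continuous_inv_sqrt_one_sub_sq_mul_sin_sq (hk : k ^ 2 < 1) :
    Continuous fun θ => 1 / √(1 - k ^ 2 * sin θ ^ 2) :=
  continuous_const.div (continuous_sqrt_one_sub_sq_mul_sin_sq k) fun θ =>
    (sqrt_one_sub_sq_mul_sin_sq_pos hk θ).ne'

lemma hasDerivAt_sqrt_one_sub_sq_mul {c : ℝ} (hk : 0 < 1 - k ^ 2 * c) :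
    HasDerivAt (fun x => √(1 - x ^ 2 * c)) (-(k * c) / √(1 - k ^ 2 * c)) k := by
  have hinner : HasDerivAt (fun x => 1 - x ^ 2 * c) (-(2 * k * c)) k := by
    simpa using ((hasDerivAt_pow 2 k).mul_const c).const_sub 1
  convert hinner.sqrt hk.ne' using 1
  field_simp

lemma hasDerivAt_inv_sqrt_one_sub_sq_mul {c : ℝ} (hk : 0 < 1 - k ^ 2 * c) :
    HasDerivAt (fun x => 1 / √(1 - x ^ 2 * c)) (k * c / √(1 - k ^ 2 * c) ^ 3) k := by
  simp only [one_div]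
  refine ((hasDerivAt_sqrt_one_sub_sq_mul hk).fun_inv (sqrt_pos.2 hk).ne').congr_deriv ?_
  field_simp

lemma hasDerivAt_EllipticE (hk0 : k ≠ 0) (hk : k ^ 2 < 1) :
    HasDerivAt EllipticE ((EllipticE k - EllipticK k) / k) k := by
  have hderiv := hasDerivAt_intervalIntegral_of_continuousOn
    (F := fun x θ => √(1 - x ^ 2 * sin θ ^ 2))
    (F' := fun x θ => -(x * sin θ ^ 2) / √(1 - x ^ 2 * sin θ ^ 2))
    (isOpen_lt (by fun_prop) continuous_const) (show k ∈ {x : ℝ | x ^ 2 < 1} from hk) 0 (π / 2)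
    (by fun_prop)
    ((by fun_prop : Continuous _).continuousOn.div (by fun_prop) fun p hp =>
      (sqrt_one_sub_sq_mul_sin_sq_pos hp.1 p.2).ne')
    fun x hx θ => hasDerivAt_sqrt_one_sub_sq_mul (one_sub_sq_mul_sin_sq_pos hx θ)
  suffices (∫ θ in (0:ℝ)..π / 2, -(k * sin θ ^ 2) / √(1 - k ^ 2 * sin θ ^ 2)) =
      (EllipticE k - EllipticK k) / k from this ▸ hderiv
  rw [eq_div_iff hk0, ← intervalIntegral.integral_mul_const, EllipticE, EllipticK,
    ← intervalIntegral.integral_sub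
      ((continuous_sqrt_one_sub_sq_mul_sin_sq k).intervalIntegrable _ _)
      ((continuous_inv_sqrt_one_sub_sq_mul_sin_sq hk).intervalIntegrable _ _)]
  refine intervalIntegral.integral_congr fun θ _ => ?_
  have := one_sub_sq_mul_sin_sq_pos hk θ
  field_simp
  rw [sq_sqrt this.le]
  ring

lemma hasDerivAt_sin_mul_cos_div_sqrt (hk : k ^ 2 < 1) (θ : ℝ) :
    HasDerivAt (fun θ => k ^ 2 * sin θ * cos θ / √(1 - k ^ 2 * sin θ ^ 2))
      (√(1 - k ^ 2 * sin θ ^ 2) - (1 - k ^ 2) * (1 / √(1 - k ^ 2 * sin θ ^ 2) ^ 3)) θ := by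
  have hX := one_sub_sq_mul_sin_sq_pos hk θ
  have hinner :
      HasDerivAt (fun θ => 1 - k ^ 2 * sin θ ^ 2) (-(k ^ 2 * (2 * sin θ * cos θ))) θ := by
    simpa using (((hasDerivAt_sin θ).pow 2).const_mul (k ^ 2)).const_sub 1
  have hnum :
      HasDerivAt (fun θ => k ^ 2 * sin θ * cos θ) (k ^ 2 * (cos θ ^ 2 - sin θ ^ 2)) θ :=
    (((hasDerivAt_sin θ).const_mul (k ^ 2)).mul (hasDerivAt_cos θ)).congr_deriv (by ring)
  refine (hnum.div (hinner.sqrt hX.ne') (sqrt_pos.2 hX).ne').congr_deriv ?_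
  field_simp
  rw [show √(1 - k ^ 2 * sin θ ^ 2) ^ 4 = (√(1 - k ^ 2 * sin θ ^ 2) ^ 2) ^ 2 by ring,
    sq_sqrt hX.le, cos_sq']
  ring

lemma intervalIntegrable_inv_sqrt_one_sub_sq_mul_sin_sq_pow_three (hk : k ^ 2 < 1) (a b : ℝ) :
    IntervalIntegrable (fun θ => 1 / √(1 - k ^ 2 * sin θ ^ 2) ^ 3) volume a b :=
  (continuous_const.div (by fun_prop) fun θ =>
    pow_ne_zero 3 (sqrt_one_sub_sq_mul_sin_sq_pos hk θ).ne').intervalIntegrable a b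

lemma integral_inv_sqrt_one_sub_sq_mul_sin_sq_pow_three (hk : k ^ 2 < 1) :
    ∫ θ in (0:ℝ)..π / 2, 1 / √(1 - k ^ 2 * sin θ ^ 2) ^ 3 = EllipticE k / (1 - k ^ 2) := by
  have hsqrt :=
    (continuous_sqrt_one_sub_sq_mul_sin_sq k).intervalIntegrable (μ := volume) 0 (π / 2)
  have hcube :=
    (intervalIntegrable_inv_sqrt_one_sub_sq_mul_sin_sq_pow_three hk 0 (π / 2)).const_mul
      (1 - k ^ 2)
  have hFTC := intervalIntegral.integral_eq_sub_of_hasDerivAt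
    (fun θ _ => hasDerivAt_sin_mul_cos_div_sqrt hk θ) (hsqrt.sub hcube)
  rw [intervalIntegral.integral_sub hsqrt hcube, intervalIntegral.integral_const_mul] at hFTC
  simp only [sin_zero, cos_pi_div_two, mul_zero, zero_mul, zero_div, sub_zero] at hFTC
  rw [eq_div_iff (by linarith), EllipticE]
  linarith

lemma hasDerivAt_EllipticK (hk0 : k ≠ 0) (hk : k ^ 2 < 1) :
    HasDerivAt EllipticK ((EllipticE k - (1 - k ^ 2) * EllipticK k) / (k * (1 - k ^ 2))) k := by
  have hderiv := hasDerivAt_intervalIntegral_of_continuousOn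
    (F := fun x θ => 1 / √(1 - x ^ 2 * sin θ ^ 2))
    (F' := fun x θ => x * sin θ ^ 2 / √(1 - x ^ 2 * sin θ ^ 2) ^ 3)
    (isOpen_lt (by fun_prop) continuous_const) (show k ∈ {x : ℝ | x ^ 2 < 1} from hk) 0 (π / 2)
    (continuousOn_const.div (by fun_prop) fun p hp =>
      (sqrt_one_sub_sq_mul_sin_sq_pos hp.1 p.2).ne')
    ((by fun_prop : Continuous _).continuousOn.div (by fun_prop) fun p hp =>
      pow_ne_zero 3 (sqrt_one_sub_sq_mul_sin_sq_pos hp.1 p.2).ne')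
    fun x hx θ => hasDerivAt_inv_sqrt_one_sub_sq_mul (one_sub_sq_mul_sin_sq_pos hx θ)
  suffices (∫ θ in (0:ℝ)..π / 2, k * sin θ ^ 2 / √(1 - k ^ 2 * sin θ ^ 2) ^ 3) =
      (EllipticE k - (1 - k ^ 2) * EllipticK k) / (k * (1 - k ^ 2)) from this ▸ hderiv
  have hsplit : ∀ θ ∈ uIcc (0:ℝ) (π / 2), k * sin θ ^ 2 / √(1 - k ^ 2 * sin θ ^ 2) ^ 3 =
      k⁻¹ * (1 / √(1 - k ^ 2 * sin θ ^ 2) ^ 3 - 1 / √(1 - k ^ 2 * sin θ ^ 2)) :=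
    fun θ _ => by
    have := one_sub_sq_mul_sin_sq_pos hk θ
    field_simp
    rw [sq_sqrt this.le]
    ring
  rw [intervalIntegral.integral_congr hsplit, intervalIntegral.integral_const_mul,
    intervalIntegral.integral_sub
      (intervalIntegrable_inv_sqrt_one_sub_sq_mul_sin_sq_pow_three hk _ _)
      ((continuous_inv_sqrt_one_sub_sq_mul_sin_sq hk).intervalIntegrable _ _),
    integral_inv_sqrt_one_sub_sq_mul_sin_sq_pow_three hk, ← EllipticK]
  have : 1 - k ^ 2 ≠ 0 := by linarith
  field_simp

noncomputable def legendreSum (k : ℝ) : ℝ :=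
  EllipticK k * EllipticE √(1 - k ^ 2) + EllipticE k * EllipticK √(1 - k ^ 2) -
    EllipticK k * EllipticK √(1 - k ^ 2)

lemma hasDerivAt_legendreSum (hk0 : 0 < k) (hk1 : k < 1) : HasDerivAt legendreSum 0 k := by
  have hk : k ^ 2 < 1 := by nlinarith
  have hk' : 0 < 1 - k ^ 2 := by linarith
  have hc : HasDerivAt (fun x => √(1 - x ^ 2)) (-k / √(1 - k ^ 2)) k := by
    simpa using hasDerivAt_sqrt_one_sub_sq_mul (c := 1) (by simpa using hk')
  set c := √(1 - k ^ 2)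
  have hc0 : c ≠ 0 := (sqrt_pos.2 hk').ne'
  have hc2 : c ^ 2 = 1 - k ^ 2 := sq_sqrt hk'.le
  have hc1 : c ^ 2 < 1 := by nlinarith
  have hK := hasDerivAt_EllipticK hk0.ne' hk
  have hE := hasDerivAt_EllipticE hk0.ne' hk
  have hKc := (hasDerivAt_EllipticK hc0 hc1).comp k hc
  have hEc := (hasDerivAt_EllipticE hc0 hc1).comp k hc
  refine (((hK.mul hEc).add (hE.mul hKc)).sub (hK.mul hKc)).congr_deriv ?_
  simp only [Function.comp_apply]
  rw [hc2, show 1 - (1 - k ^ 2) = k ^ 2 by ring]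
  field_simp
  linear_combination (EllipticE k * EllipticE c - EllipticE k * k ^ 2 * EllipticK c +
    k ^ 2 * EllipticK k * EllipticE c - EllipticK k * EllipticE c) * hc2

lemma EllipticK_zero : EllipticK 0 = π / 2 := by
  simp [EllipticK]

lemma EllipticE_one : EllipticE 1 = 1 := by
  have hcos : ∀ θ ∈ uIcc (0:ℝ) (π / 2), √(1 - 1 ^ 2 * sin θ ^ 2) = cos θ := by
    intro θ hθ
    rw [uIcc_of_le pi_div_two_pos.le] at hθ
    rw [one_pow, one_mul, ← cos_sq',
      sqrt_sq (cos_nonneg_of_mem_Icc ⟨by linarith [hθ.1, pi_pos], hθ.2⟩)]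
  rw [EllipticE, intervalIntegral.integral_congr hcos]
  simp

lemma continuous_EllipticE : Continuous EllipticE :=
  intervalIntegral.continuous_parametric_intervalIntegral_of_continuous' (by fun_prop) 0 (π / 2)

lemma EllipticK_nonneg (k : ℝ) : 0 ≤ EllipticK k :=
  intervalIntegral.integral_nonneg pi_div_two_pos.le fun θ _ => by positivity

lemma pi_div_two_le_EllipticK (hk : k ^ 2 < 1) : π / 2 ≤ EllipticK k := by
  simpa [EllipticK] using intervalIntegral.integral_mono_on (μ := volume) pi_div_two_pos.le
    intervalIntegrable_const
    ((continuous_inv_sqrt_one_sub_sq_mul_sin_sq hk).intervalIntegrable _ _) fun θ _ =>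
      one_le_one_div (sqrt_one_sub_sq_mul_sin_sq_pos hk θ) (sqrt_one_sub_sq_mul_sin_sq_le_one k θ)

lemma EllipticK_le (hk : k ^ 2 < 1) : EllipticK k ≤ π / 2 / √(1 - k ^ 2) := by
  have hk' : 0 < √(1 - k ^ 2) := sqrt_pos.2 (by linarith)
  simpa [EllipticK, div_eq_mul_one_div (π / 2)] using
    intervalIntegral.integral_mono_on (μ := volume) pi_div_two_pos.le
    ((continuous_inv_sqrt_one_sub_sq_mul_sin_sq hk).intervalIntegrable _ _) intervalIntegrable_const
    fun θ _ => one_div_le_one_div_of_le hk' (sqrt_one_sub_sq_le_sqrt_one_sub_sq_mul_sin_sq k θ)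

lemma EllipticE_le_EllipticK (hk : k ^ 2 < 1) : EllipticE k ≤ EllipticK k :=
  intervalIntegral.integral_mono_on pi_div_two_pos.le
    ((continuous_sqrt_one_sub_sq_mul_sin_sq k).intervalIntegrable _ _)
    ((continuous_inv_sqrt_one_sub_sq_mul_sin_sq hk).intervalIntegrable _ _) fun θ _ => by
      have := sqrt_one_sub_sq_mul_sin_sq_pos hk θ
      have := sqrt_one_sub_sq_mul_sin_sq_le_one k θ
      rw [le_div_iff₀ (by assumption)]
      nlinarith

lemma one_sub_sq_mul_EllipticK_le_EllipticE (hk : k ^ 2 < 1) :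
    (1 - k ^ 2) * EllipticK k ≤ EllipticE k := by
  rw [EllipticK, ← intervalIntegral.integral_const_mul]
  refine intervalIntegral.integral_mono_on pi_div_two_pos.le
    (((continuous_inv_sqrt_one_sub_sq_mul_sin_sq hk).intervalIntegrable _ _).const_mul _)
    ((continuous_sqrt_one_sub_sq_mul_sin_sq k).intervalIntegrable _ _) fun θ _ => ?_
  have hX := one_sub_sq_mul_sin_sq_pos hk θ
  rw [mul_one_div, div_le_iff₀ (sqrt_pos.2 hX), ← sq, sq_sqrt hX.le]
  nlinarith [sin_sq_le_one θ]

lemma continuousAt_EllipticK_zero : ContinuousAt EllipticK 0 := by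
  have hnear : ∀ᶠ x in 𝓝 (0:ℝ), x ^ 2 < 1 :=
    (isOpen_lt (by fun_prop) continuous_const).mem_nhds (by norm_num : (0:ℝ) ^ 2 < 1)
  have hupper : Tendsto (fun x : ℝ => π / 2 / √(1 - x ^ 2)) (𝓝 0) (𝓝 (π / 2)) := by
    simpa using (by fun_prop (disch := simp) :
      ContinuousAt (fun x : ℝ => π / 2 / √(1 - x ^ 2)) 0).tendsto
  rw [ContinuousAt, EllipticK_zero]
  exact tendsto_of_tendsto_of_tendsto_of_le_of_le' tendsto_const_nhds hupper
    (hnear.mono fun _ => pi_div_two_le_EllipticK) (hnear.mono fun _ => EllipticK_le)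

lemma EllipticK_sqrt_one_sub_sq_le (hk0 : 0 < k) (hk1 : k < 1) :
    EllipticK √(1 - k ^ 2) ≤ π / 2 / k := by
  have hk' : 0 ≤ 1 - k ^ 2 := by nlinarith
  have h := EllipticK_le (k := √(1 - k ^ 2)) (by rw [sq_sqrt hk']; nlinarith)
  rwa [sq_sqrt hk', sub_sub_cancel, sqrt_sq hk0.le] at h

lemma tendsto_legendreSum_nhdsGT_zero : Tendsto legendreSum (𝓝[>] 0) (𝓝 (π / 2)) := by
  have hK : Tendsto EllipticK (𝓝[>] 0) (𝓝 (π / 2)) := by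
    simpa [EllipticK_zero] using continuousAt_EllipticK_zero.tendsto.mono_left nhdsWithin_le_nhds
  have hE : Tendsto (fun x : ℝ => EllipticE √(1 - x ^ 2)) (𝓝[>] 0) (𝓝 1) := by
    simpa [EllipticE_one, Function.comp_def] using ((continuous_EllipticE.comp
      (by fun_prop : Continuous fun x : ℝ => √(1 - x ^ 2))).tendsto 0).mono_left
      nhdsWithin_le_nhds
  have hcross : Tendsto (fun x => (EllipticK x - EllipticE x) * EllipticK √(1 - x ^ 2))
      (𝓝[>] 0) (𝓝 0) := by
    have hbound : Tendsto (fun x => x * EllipticK x * (π / 2)) (𝓝[>] 0) (𝓝 0) := by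
      simpa using ((tendsto_nhdsWithin_of_tendsto_nhds tendsto_id).mul hK).mul_const (π / 2)
    refine tendsto_of_tendsto_of_tendsto_of_le_of_le' tendsto_const_nhds hbound ?_ ?_ <;>
      filter_upwards [Ioo_mem_nhdsGT one_pos] with x ⟨hx0, hx1⟩
    · exact mul_nonneg (sub_nonneg.2 (EllipticE_le_EllipticK (by nlinarith))) (EllipticK_nonneg _)
    · calc (EllipticK x - EllipticE x) * EllipticK √(1 - x ^ 2)
          ≤ x ^ 2 * EllipticK x * (π / 2 / x) :=
            mul_le_mul (by linarith [one_sub_sq_mul_EllipticK_le_EllipticE (k := x) (by nlinarith)])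
              (EllipticK_sqrt_one_sub_sq_le hx0 hx1) (EllipticK_nonneg _)
              (mul_nonneg (sq_nonneg x) (EllipticK_nonneg x))
        _ = x * EllipticK x * (π / 2) := by field_simp
  have hlim := (hK.mul hE).sub hcross
  rw [mul_one, sub_zero] at hlim
  exact hlim.congr fun x => by rw [legendreSum]; ring

end

/-- Legendre's relation: for `0 < k < 1`, with `k' = √(1 - k²)`,
`K(k)·E(k') + E(k)·K(k') − K(k)·K(k') = π/2`. -/
theorem legendre_relation (k : ℝ) (hk0 : 0 < k) (hk1 : k < 1) :
    EllipticK k * EllipticE (Real.sqrt (1 - k ^ 2)) +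
      EllipticE k * EllipticK (Real.sqrt (1 - k ^ 2)) -
      EllipticK k * EllipticK (Real.sqrt (1 - k ^ 2)) = π / 2 := by
  have hconst : ∀ x ∈ Ioo (0:ℝ) 1, legendreSum x = legendreSum k := fun x hx =>
    isOpen_Ioo.is_const_of_deriv_eq_zero isPreconnected_Ioo
      (fun y hy => (hasDerivAt_legendreSum hy.1 hy.2).differentiableAt.differentiableWithinAt)
      (fun y hy => (hasDerivAt_legendreSum hy.1 hy.2).deriv) hx ⟨hk0, hk1⟩
  have hlim : Tendsto legendreSum (𝓝[>] 0) (𝓝 (legendreSum k)) :=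
    tendsto_const_nhds.congr' <|
      eventually_of_mem (Ioo_mem_nhdsGT one_pos) fun x hx => (hconst x hx).symm
  exact tendsto_nhds_unique hlim tendsto_legendreSum_nhdsGT_zero
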